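/- For the Klein quartic f4 = y1^3 y2 − y2^3 y3 − y3^3 y1 and a point y on the curve {f4 = 0} ⊂ P^2, the conic C_y = {P_{y^2}(f4)(x) = 0} is tangent to the quartic at y: both have tangent line {(3y1^2 y2 − y3^3) x1 + (y1^3 − 3 y2^2 y3) x2 − (3 y1 y3^2 + y2^3) x3 = 0} at y. -/
import Mathlib


/- STATEMENT 10: For the Klein quartic f4 = y1³y2 − y2³y3 − y3³y1 (indices
0,1,2) and a point y on {f4 = 0}, the conic C_y = {P_{y²}(f4)(x) = 0} is
tangent to the quartic at y: the gradient of f4 at y is the explicit vector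
(3y1²y2 − y3³, y1³ − 3y2²y3, −(3y1y3² + y2³)) and the gradient of P_{y²}(f4)
at x = y is proportional to it. -/

open MvPolynomial

noncomputable def klein : MvPolynomial (Fin 3) ℂ :=
  X 0 ^ 3 * X 1 - X 1 ^ 3 * X 2 - X 2 ^ 3 * X 0

/-- The second polar conic P_{y²}(f4), as a polynomial in x with parameter y. -/
noncomputable def polarConic (y : Fin 3 → ℂ) : MvPolynomial (Fin 3) ℂ :=
  C ((1 : ℂ) / 2) *
    (C (y 0 * y 1) * X 0 ^ 2 - C (y 1 * y 2) * X 1 ^ 2 - C (y 0 * y 2) * X 2 ^ 2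
      + C (y 0 ^ 2) * X 0 * X 1 - C (y 1 ^ 2) * X 1 * X 2 - C (y 2 ^ 2) * X 0 * X 2)

theorem stmt10 (y : Fin 3 → ℂ) (hy : eval y klein = 0) :
    (∀ i : Fin 3, eval y (pderiv i klein) =
      ![3 * y 0 ^ 2 * y 1 - y 2 ^ 3,
        y 0 ^ 3 - 3 * y 1 ^ 2 * y 2,
        -(3 * y 0 * y 2 ^ 2 + y 1 ^ 3)] i) ∧
    ∃ c : ℂ, ∀ i : Fin 3,
      eval y (pderiv i (polarConic y)) = c * eval y (pderiv i klein) := by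
  constructor
  · intro i
    fin_cases i <;>
      simp [klein, pderiv_X, pderiv_mul, pderiv_pow, map_sub] <;> ring
  · refine ⟨1 / 2, fun i => ?_⟩
    fin_cases i <;>
      simp [klein, polarConic, pderiv_X, pderiv_mul, pderiv_pow, map_sub,
        map_add, pderiv_C] <;> ring
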